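/- Let P ∈ ℝ^{n×n} be symmetric positive semidefinite, let Q ∈ ℝ^{m×m} be symmetric positive definite, and let B ∈ ℝ^{m×n} have full column rank (rank B = n). Consider the real (n+m)×(n+m) block matrix J = [[−P, −Bᵀ], [B, −Q]]. Then every complex eigenvalue λ of J satisfies Re(λ) < 0. -/

import Mathlib

open Matrix
open scoped ComplexOrder

/-! If `J v = λ v` with `v = (x, y)`, the off-diagonal blocks `-Bᴴ` and `B` cancel in the real
part of the quadratic form, so `Re λ · ‖v‖² = Re ⟪v, J v⟫ = -⟪x, P x⟫ - ⟪y, Q y⟫`. The second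
block row of the eigen-equation reads `B x = (λ + Q) y`, so `y = 0` would force `B x = 0` and
then `x = 0` by full column rank. Hence `y ≠ 0`, `⟪y, Q y⟫ > 0`, and `Re λ < 0`.
The hypotheses on the real matrices pass to their complexifications by splitting complex vectors
into real and imaginary parts. -/

namespace Complex

variable {n m : Type*} [Fintype n]

theorem re_star_dotProduct (v w : n → ℂ) :
    (star v ⬝ᵥ w).re = (re ∘ v) ⬝ᵥ (re ∘ w) + (im ∘ v) ⬝ᵥ (im ∘ w) := by
  simp [dotProduct, re_sum, Finset.sum_add_distrib]

theorem re_comp_map_ofReal_mulVec (A : Matrix m n ℝ) (v : n → ℂ) :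
    re ∘ (A.map ofReal *ᵥ v) = A *ᵥ (re ∘ v) := by
  ext i
  simp [mulVec, dotProduct, re_sum]

theorem im_comp_map_ofReal_mulVec (A : Matrix m n ℝ) (v : n → ℂ) :
    im ∘ (A.map ofReal *ᵥ v) = A *ᵥ (im ∘ v) := by
  ext i
  simp [mulVec, dotProduct, im_sum]

theorem re_star_dotProduct_map_ofReal_mulVec (A : Matrix n n ℝ) (v : n → ℂ) :
    (star v ⬝ᵥ A.map ofReal *ᵥ v).re = (re ∘ v) ⬝ᵥ A *ᵥ (re ∘ v) + (im ∘ v) ⬝ᵥ A *ᵥ (im ∘ v) := by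
  rw [re_star_dotProduct, re_comp_map_ofReal_mulVec, im_comp_map_ofReal_mulVec]

end Complex

namespace Matrix

variable {n m : Type*} [Fintype n]

theorem exists_mulVec_eq_smul_of_mem_spectrum {K : Type*} [Field K] [DecidableEq n]
    {A : Matrix n n K} {μ : K} (hμ : μ ∈ spectrum K A) : ∃ v ≠ 0, A *ᵥ v = μ • v := by
  rw [← spectrum_toLin'] at hμ
  obtain ⟨v, hv⟩ := (Module.End.HasEigenvalue.of_mem_spectrum hμ).exists_hasEigenvector
  exact ⟨v, hv.2, by simpa using hv.apply_eq_smul⟩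

theorem mulVec_injective_of_rank_eq_card {K : Type*} [Field K] {B : Matrix m n K}
    (hB : B.rank = Fintype.card n) : Function.Injective B.mulVec := by
  have hker := LinearMap.finrank_range_add_finrank_ker B.mulVecLin
  rw [← Matrix.rank, hB, Module.finrank_fintype_fun_eq_card, add_eq_left,
    Submodule.finrank_eq_zero, LinearMap.ker_eq_bot] at hker
  exact hker

theorem PosSemidef.map_ofReal {P : Matrix n n ℝ} (hP : P.PosSemidef) :
    (P.map Complex.ofReal).PosSemidef := by
  have herm : (P.map Complex.ofReal).IsHermitian := hP.isHermitian.map _ fun r => by simp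
  refine .of_dotProduct_mulVec_nonneg herm fun v => Complex.nonneg_iff.mpr
    ⟨?_, (herm.im_star_dotProduct_mulVec_self v).symm⟩
  rw [Complex.re_star_dotProduct_map_ofReal_mulVec]
  exact add_nonneg (by simpa using hP.dotProduct_mulVec_nonneg _)
    (by simpa using hP.dotProduct_mulVec_nonneg _)

theorem PosDef.map_ofReal {Q : Matrix n n ℝ} (hQ : Q.PosDef) :
    (Q.map Complex.ofReal).PosDef := by
  have herm : (Q.map Complex.ofReal).IsHermitian := hQ.isHermitian.map _ fun r => by simp
  refine .of_dotProduct_mulVec_pos herm fun v hv => Complex.pos_iff.mpr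
    ⟨?_, (herm.im_star_dotProduct_mulVec_self v).symm⟩
  rw [Complex.re_star_dotProduct_map_ofReal_mulVec]
  have hre := hQ.posSemidef.dotProduct_mulVec_nonneg (Complex.re ∘ v)
  have him := hQ.posSemidef.dotProduct_mulVec_nonneg (Complex.im ∘ v)
  simp only [star_trivial] at hre him
  by_cases hv_re : Complex.re ∘ v = 0
  · have hv_im : Complex.im ∘ v ≠ 0 := fun hv_im =>
      hv (funext fun i => Complex.ext (congrFun hv_re i) (congrFun hv_im i))
    simpa using add_pos_of_nonneg_of_pos hre (hQ.dotProduct_mulVec_pos hv_im)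
  · simpa using add_pos_of_pos_of_nonneg (hQ.dotProduct_mulVec_pos hv_re) him

theorem mulVec_map_ofReal_injective {B : Matrix m n ℝ}
    (hB : Function.Injective B.mulVec) : Function.Injective (B.map Complex.ofReal).mulVec := by
  intro v w hvw
  have hre : Complex.re ∘ v = Complex.re ∘ w := hB <| by
    rw [← Complex.re_comp_map_ofReal_mulVec, hvw, Complex.re_comp_map_ofReal_mulVec]
  have him : Complex.im ∘ v = Complex.im ∘ w := hB <| by
    rw [← Complex.im_comp_map_ofReal_mulVec, hvw, Complex.im_comp_map_ofReal_mulVec]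
  exact funext fun i => Complex.ext (congrFun hre i) (congrFun him i)

variable [Fintype m] {𝕜 : Type*} [RCLike 𝕜]

theorem re_star_dotProduct_fromBlocks_neg_conjTranspose_mulVec (A : Matrix n n 𝕜)
    (B : Matrix m n 𝕜) (D : Matrix m m 𝕜) (x : n → 𝕜) (y : m → 𝕜) :
    RCLike.re (star (Sum.elim x y) ⬝ᵥ fromBlocks A (-Bᴴ) B D *ᵥ Sum.elim x y) =
      RCLike.re (star x ⬝ᵥ A *ᵥ x) + RCLike.re (star y ⬝ᵥ D *ᵥ y) := by
  have skew : star x ⬝ᵥ -Bᴴ *ᵥ y = -star (star y ⬝ᵥ B *ᵥ x) := by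
    rw [neg_mulVec, dotProduct_neg, dotProduct_mulVec, ← star_mulVec, star_dotProduct]
  rw [fromBlocks_mulVec, Sum.elim_comp_inl, Sum.elim_comp_inr, Function.star_sumElim,
    sumElim_dotProduct_sumElim, dotProduct_add, dotProduct_add, skew]
  simp only [map_add, map_neg, RCLike.star_def, RCLike.conj_re]
  ring

theorem re_lt_zero_of_mem_spectrum_fromBlocks [DecidableEq n] [DecidableEq m]
    {A : Matrix n n 𝕜} {B : Matrix m n 𝕜} {D : Matrix m m 𝕜} (hA : A.PosSemidef)
    (hD : D.PosDef) (hB : Function.Injective B.mulVec) {μ : 𝕜}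
    (hμ : μ ∈ spectrum 𝕜 (fromBlocks (-A) (-Bᴴ) B (-D))) : RCLike.re μ < 0 := by
  obtain ⟨v, hv0, hv⟩ := exists_mulVec_eq_smul_of_mem_spectrum hμ
  obtain ⟨x, y, rfl⟩ : ∃ x y, v = Sum.elim x y := ⟨_, _, (Sum.elim_comp_inl_inr v).symm⟩
  have hy : y ≠ 0 := by
    rintro rfl
    have hrow : B *ᵥ x = B *ᵥ 0 := by
      ext j
      simpa [fromBlocks_mulVec] using congrFun hv (Sum.inr j)
    have hx : x = 0 := hB hrow
    exact hv0 (by rw [hx, Sum.elim_zero_zero])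
  have hnorm_nonneg := dotProduct_star_self_nonneg (Sum.elim x y)
  have hnorm : 0 < RCLike.re (star (Sum.elim x y) ⬝ᵥ Sum.elim x y) :=
    (RCLike.pos_iff.mp (hnorm_nonneg.lt_of_ne' (dotProduct_star_self_eq_zero.not.mpr hv0))).1
  have hx_nonneg : 0 ≤ RCLike.re (star x ⬝ᵥ A *ᵥ x) :=
    (RCLike.nonneg_iff.mp (hA.dotProduct_mulVec_nonneg x)).1
  have hy_pos : 0 < RCLike.re (star y ⬝ᵥ D *ᵥ y) :=
    (RCLike.pos_iff.mp (hD.dotProduct_mulVec_pos hy)).1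
  have hquad : RCLike.re μ * RCLike.re (star (Sum.elim x y) ⬝ᵥ Sum.elim x y) =
      -RCLike.re (star x ⬝ᵥ A *ᵥ x) - RCLike.re (star y ⬝ᵥ D *ᵥ y) := by
    calc RCLike.re μ * _ = RCLike.re (star (Sum.elim x y) ⬝ᵥ μ • Sum.elim x y) := by
          rw [dotProduct_smul, smul_eq_mul, RCLike.mul_re, (RCLike.nonneg_iff.mp hnorm_nonneg).2,
            mul_zero, sub_zero]
      _ = _ := by
          rw [← hv, re_star_dotProduct_fromBlocks_neg_conjTranspose_mulVec]
          simp only [neg_mulVec, dotProduct_neg, map_neg, sub_eq_add_neg]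
  exact neg_of_mul_neg_right (by linarith) hnorm.le

end Matrix

theorem generalized_gan_jacobian_eigenvalues_negative
    {n m : ℕ} (P : Matrix (Fin n) (Fin n) ℝ) (Q : Matrix (Fin m) (Fin m) ℝ)
    (B : Matrix (Fin m) (Fin n) ℝ)
    (hPpsd : P.PosSemidef)
    (hQpd : Q.PosDef) (hB : B.rank = n)
    (J : Matrix (Fin n ⊕ Fin m) (Fin n ⊕ Fin m) ℝ)
    (hJ : J = Matrix.fromBlocks (-P) (-Bᵀ) B (-Q)) :
    ∀ lam ∈ spectrum ℂ (J.map Complex.ofReal), lam.re < 0 := by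
  intro lam hlam
  have hJℂ : J.map Complex.ofReal = fromBlocks (-P.map Complex.ofReal)
      (-(B.map Complex.ofReal)ᴴ) (B.map Complex.ofReal) (-Q.map Complex.ofReal) := by
    rw [hJ, fromBlocks_map, ← conjTranspose_map _ fun r => by simp,
      conjTranspose_eq_transpose_of_trivial]
    simp only [Matrix.map_neg _ Complex.ofReal_neg]
  rw [hJℂ] at hlam
  exact re_lt_zero_of_mem_spectrum_fromBlocks hPpsd.map_ofReal hQpd.map_ofReal
    (mulVec_map_ofReal_injective (mulVec_injective_of_rank_eq_card (by simpa using hB))) hlam
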